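/- arXiv:2007.08131 — 5 statements merged into one kernel-verified Lean document; each statement's English description precedes it below -/
import Mathlib

section
/- Let q ≥ 4 and r ≥ 1, and write m = C(q+r-3, q-2) + α with 0 ≤ α < C(q+r-3, q-3). Suppose α = β + γ with 0 ≤ β < C(q+r-4, q-3) and 0 ≤ γ < C(q+r-4, q-4). Set k = C(q+r-4, q-2) + β, so that m - k = C(q+r-4, q-3) + γ. Then K(m, q) = 2·K(k, q) + K(m-k, q-1). -/
/-!
Both sides are a weighted sum of binomial coefficients plus a linear tail. Pascal's rule
C(n+1, j+1) = C(n, j) + C(n, j+1) gives the value of m - k, after which the tails agree because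
α = β + γ; summed against the weights 2^t, the same rule splits the sum for q pegs into twice the
shorter sum for q pegs plus the sum for q - 1 pegs.
-/

open Finset in
/-- The Frame-Stewart quantity with explicit level r:
K(n,p) = sum_{t=0}^{r-1} 2^t * C(p+t-3,p-3) + 2^r * (n - C(p+r-3,p-2)). -/
def FSK (n p r : ℕ) : ℕ :=
  (∑ t ∈ Finset.range r, 2 ^ t * Nat.choose (p + t - 3) (p - 3)) +
    2 ^ r * (n - Nat.choose (p + r - 3) (p - 2))

open Finset

theorem sum_range_succ_two_pow_mul_choose_succ (b c : ℕ) :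
    ∑ t ∈ range (c + 1), 2 ^ t * (b + 1 + t).choose (b + 1) =
      2 * ∑ t ∈ range c, 2 ^ t * (b + 1 + t).choose (b + 1) +
        ∑ t ∈ range (c + 1), 2 ^ t * (b + t).choose b := by
  induction c with
  | zero => simp
  | succ c ih =>
    have pascal : (b + 1 + (c + 1)).choose (b + 1) =
        (b + 1 + c).choose (b + 1) + (b + (c + 1)).choose b := by
      rw [show b + 1 + (c + 1) = b + (c + 1) + 1 by omega, Nat.choose_succ_succ',
        show b + (c + 1) = b + 1 + c by omega, add_comm]
    set f := fun t => 2 ^ t * (b + 1 + t).choose (b + 1)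
    set g := fun t => 2 ^ t * (b + t).choose b
    conv_lhs => rw [sum_range_succ, ih]
    rw [sum_range_succ f c, sum_range_succ g (c + 1)]
    simp only [f, g, pascal]
    ring

theorem FSK_add_three (n b r : ℕ) :
    FSK n (b + 3) r =
      ∑ t ∈ range r, 2 ^ t * (b + t).choose b + 2 ^ r * (n - (b + r).choose (b + 1)) := by
  have hsum : ∀ t, b + 3 + t - 3 = b + t := fun t => by omega
  simp only [FSK, hsum, Nat.add_sub_cancel, show b + 3 - 2 = b + 1 by omega]

theorem FSK_recursion_general (q r m k α β γ : ℕ) (hq : 4 ≤ q) (hr : 1 ≤ r)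
    (hm : m = Nat.choose (q + r - 3) (q - 2) + α)
    (hαβγ : α = β + γ)
    (hk : k = Nat.choose (q + r - 4) (q - 2) + β) :
    m - k = Nat.choose (q + r - 4) (q - 3) + γ ∧
      FSK m q r = 2 * FSK k q (r - 1) + FSK (m - k) (q - 1) r := by
  obtain ⟨b, rfl⟩ : ∃ b, q = b + 1 + 3 := ⟨q - 4, by omega⟩
  obtain ⟨c, rfl⟩ : ∃ c, r = c + 1 := ⟨r - 1, by omega⟩
  simp only [show b + 1 + 3 + (c + 1) - 3 = b + 1 + (c + 1) by omega,
    show b + 1 + 3 + (c + 1) - 4 = b + 1 + c by omega, show b + 1 + 3 - 2 = b + 1 + 1 by omega,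
    show b + 1 + 3 - 3 = b + 1 by omega] at hm hk ⊢
  have pascal : (b + 1 + (c + 1)).choose (b + 1 + 1) =
      (b + 1 + c).choose (b + 1) + (b + 1 + c).choose (b + 1 + 1) := Nat.choose_succ_succ' _ _
  have hmk : m - k = (b + 1 + c).choose (b + 1) + γ := by omega
  refine ⟨hmk, ?_⟩
  rw [hmk, show b + 1 + 3 - 1 = b + 3 by omega, add_tsub_cancel_right,
    FSK_add_three, FSK_add_three, FSK_add_three, sum_range_succ_two_pow_mul_choose_succ,
    show b + (c + 1) = b + 1 + c by omega, add_tsub_cancel_left,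
    show m - (b + 1 + (c + 1)).choose (b + 1 + 1) = α by omega,
    show k - (b + 1 + c).choose (b + 1 + 1) = β by omega, hαβγ]
  ring

/-- The Frame-Stewart recursion step: K(m,q) = 2*K(k,q) + K(m-k,q-1), where k has level r-1 for q pegs and m-k has level r for q-1 pegs. -/
theorem FSK_recursion (q r m k α β γ : ℕ) (hq : 4 ≤ q) (hr : 1 ≤ r)
    (hm : m = Nat.choose (q + r - 3) (q - 2) + α)
    (hα : α < Nat.choose (q + r - 3) (q - 3))
    (hβ : β < Nat.choose (q + r - 4) (q - 3))
    (hγ : γ < Nat.choose (q + r - 4) (q - 4))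
    (hαβγ : α = β + γ)
    (hk : k = Nat.choose (q + r - 4) (q - 2) + β) :
    m - k = Nat.choose (q + r - 4) (q - 3) + γ ∧
      FSK m q r = 2 * FSK k q (r - 1) + FSK (m - k) (q - 1) r :=
  FSK_recursion_general q r m k α β γ hq hr hm hαβγ hk
end

section
/- Let n ≥ 2, p ≥ 3, and let r be the unique natural number with C(p+r-3, p-2) ≤ n < C(p+r-2, p-2). Then K(n,p) - K(n-1,p) equals 2^{r-1} if n = C(p+r-3, p-2), and equals 2^r otherwise. -/
open Nat

theorem choose_succ_level_eq {p s : ℕ} (hp : 3 ≤ p) :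
    choose (p + s - 2) (p - 2) = choose (p + s - 3) (p - 2) + choose (p + s - 3) (p - 3) := by
  rw [show p + s - 2 = (p + s - 3) + 1 by omega, show p - 2 = (p - 3) + 1 by omega,
    choose_succ_succ, add_comm]

theorem choose_lt_choose_succ_level {p s : ℕ} (hp : 3 ≤ p) :
    choose (p + s - 3) (p - 2) < choose (p + s - 2) (p - 2) := by
  rw [choose_succ_level_eq hp]
  exact Nat.lt_add_of_pos_right (choose_pos (by omega))

theorem three_le_and_exists_eq_succ_of_two_le_choose {p r : ℕ}
    (h : 2 ≤ choose (p + r - 3) (p - 2)) : 3 ≤ p ∧ ∃ s, r = s + 1 := by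
  have hp : 3 ≤ p := by
    by_contra! hp
    rw [show p - 2 = 0 by omega, choose_zero_right] at h
    omega
  refine ⟨hp, r - 1, ?_⟩
  by_contra hr
  rw [choose_eq_zero_of_lt (by omega)] at h
  omega

theorem FSK_eq_FSK_pred_add_of_lt {n p r : ℕ} (h : choose (p + r - 3) (p - 2) < n) :
    FSK n p r = FSK (n - 1) p r + 2 ^ r := by
  unfold FSK
  rw [show n - choose (p + r - 3) (p - 2) = (n - 1 - choose (p + r - 3) (p - 2)) + 1 by omega]
  ring

theorem FSK_succ_level_choose {p s : ℕ} (hp : 3 ≤ p) :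
    FSK (choose (p + s - 2) (p - 2)) p (s + 1) = FSK (choose (p + s - 2) (p - 2)) p s := by
  unfold FSK
  rw [Finset.sum_range_succ, show p + (s + 1) - 3 = p + s - 2 by omega, Nat.sub_self,
    mul_zero, add_zero, choose_succ_level_eq hp, Nat.add_sub_cancel_left]

theorem FSK_succ_diff_general (n p r : ℕ) (hn : 2 ≤ n)
    (h1 : Nat.choose (p + r - 3) (p - 2) ≤ n) :
    (n = Nat.choose (p + r - 3) (p - 2) →
      FSK n p r = FSK (n - 1) p (r - 1) + 2 ^ (r - 1)) ∧
    (n ≠ Nat.choose (p + r - 3) (p - 2) →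
      FSK n p r = FSK (n - 1) p r + 2 ^ r) := by
  refine ⟨fun hc => ?_, fun hc => FSK_eq_FSK_pred_add_of_lt (lt_of_le_of_ne h1 (Ne.symm hc))⟩
  obtain ⟨hp, s, rfl⟩ := three_le_and_exists_eq_succ_of_two_le_choose (hc ▸ hn)
  rw [show p + (s + 1) - 3 = p + s - 2 by omega] at hc
  subst hc
  rw [Nat.add_sub_cancel, FSK_succ_level_choose hp]
  exact FSK_eq_FSK_pred_add_of_lt (choose_lt_choose_succ_level hp)

/-- K(n,p) - K(n-1,p) equals 2^(r-1) if n = C(p+r-3,p-2) (where n-1 has level r-1), and 2^r otherwise. -/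
theorem FSK_succ_diff (n p r : ℕ) (hn : 2 ≤ n) (hp : 3 ≤ p)
    (h1 : Nat.choose (p + r - 3) (p - 2) ≤ n)
    (h2 : n < Nat.choose (p + r - 2) (p - 2)) :
    (n = Nat.choose (p + r - 3) (p - 2) →
      FSK n p r = FSK (n - 1) p (r - 1) + 2 ^ (r - 1)) ∧
    (n ≠ Nat.choose (p + r - 3) (p - 2) →
      FSK n p r = FSK (n - 1) p r + 2 ^ r) :=
  FSK_succ_diff_general n p r hn h1
end

section
/- For n ≥ 2 and p ≥ 3 with r the unique natural number satisfying C(p+r-3, p-2) ≤ n < C(p+r-2, p-2), the inequality 2·K(n-1, p) - K(n, p) ≥ K(n, p) - 2^{r+1} holds. -/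
/-- The least `n` of level `s`. -/
def levelStart (p s : ℕ) : ℕ := Nat.choose (p + s - 3) (p - 2)

lemma levelStart_succ_eq_choose (p s : ℕ) :
    levelStart p (s + 1) = Nat.choose (p + s - 2) (p - 2) := by
  rw [levelStart, show p + (s + 1) - 3 = p + s - 2 by omega]

lemma levelStart_succ {p : ℕ} (hp : 3 ≤ p) (s : ℕ) :
    levelStart p (s + 1) = levelStart p s + Nat.choose (p + s - 3) (p - 3) := by
  rw [levelStart, levelStart, show p + (s + 1) - 3 = p + s - 3 + 1 by omega,
    show p - 2 = p - 3 + 1 by omega, Nat.choose_succ_succ', add_comm]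

lemma strictMono_levelStart {p : ℕ} (hp : 3 ≤ p) : StrictMono (levelStart p) :=
  strictMono_nat_of_lt_succ fun s => by
    have := Nat.choose_pos (show p - 3 ≤ p + s - 3 by omega)
    rw [levelStart_succ hp]
    omega

lemma StrictMono.eq_or_eq_succ_of_pred_mem {L : ℕ → ℕ} (hL : StrictMono L) {n r r' : ℕ}
    (h1 : L r ≤ n) (h2 : n < L (r + 1)) (h1' : L r' ≤ n - 1) (h2' : n - 1 < L (r' + 1)) :
    r = r' ∨ (r = r' + 1 ∧ n = L r) := by
  have hr' : r' < r + 1 := hL.lt_iff_lt.mp (by omega)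
  have hr : r ≤ r' + 1 := hL.le_iff_le.mp (by omega)
  rcases (show r = r' ∨ r = r' + 1 by omega) with rfl | rfl
  · exact Or.inl rfl
  · exact Or.inr ⟨rfl, by omega⟩

lemma FSK_le_FSK_pred_add (n p r : ℕ) : FSK n p r ≤ FSK (n - 1) p r + 2 ^ r := by
  rw [FSK, FSK, add_assoc]
  gcongr
  calc 2 ^ r * (n - Nat.choose (p + r - 3) (p - 2))
      ≤ 2 ^ r * (n - 1 - Nat.choose (p + r - 3) (p - 2) + 1) := by gcongr; omega
    _ = _ := by ring

lemma FSK_levelStart_succ {p : ℕ} (hp : 3 ≤ p) (s : ℕ) :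
    FSK (levelStart p (s + 1)) p (s + 1) = FSK (levelStart p (s + 1)) p s := by
  change _ + 2 ^ (s + 1) * (levelStart p (s + 1) - levelStart p (s + 1)) =
    _ + 2 ^ s * (levelStart p (s + 1) - levelStart p s)
  rw [Finset.sum_range_succ, Nat.sub_self, levelStart_succ hp, Nat.add_sub_cancel_left]
  ring

theorem FSK_two_pred_general (n p r r' : ℕ) (hp : 3 ≤ p)
    (h1 : Nat.choose (p + r - 3) (p - 2) ≤ n)
    (h2 : n < Nat.choose (p + r - 2) (p - 2))
    (h1' : Nat.choose (p + r' - 3) (p - 2) ≤ n - 1)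
    (h2' : n - 1 < Nat.choose (p + r' - 2) (p - 2)) :
    2 * (FSK (n - 1) p r' : ℤ) - FSK n p r ≥ (FSK n p r : ℤ) - 2 ^ (r + 1) := by
  have step : FSK n p r ≤ FSK (n - 1) p r' + 2 ^ r := by
    rcases (strictMono_levelStart hp).eq_or_eq_succ_of_pred_mem h1
        (by rwa [levelStart_succ_eq_choose]) h1' (by rwa [levelStart_succ_eq_choose])
      with rfl | ⟨rfl, rfl⟩
    · exact FSK_le_FSK_pred_add n p r
    · rw [FSK_levelStart_succ hp]
      calc _ ≤ FSK (levelStart p (r' + 1) - 1) p r' + 2 ^ r' := FSK_le_FSK_pred_add _ _ _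
        _ ≤ _ := by gcongr <;> omega
  have step' : (FSK n p r : ℤ) ≤ FSK (n - 1) p r' + 2 ^ r := by exact_mod_cast step
  rw [pow_succ]
  linarith

/-- 2*K(n-1,p) - K(n,p) >= K(n,p) - 2^(r+1), where r is the level of n and r' the level of n-1. -/
theorem FSK_two_pred (n p r r' : ℕ) (hn : 2 ≤ n) (hp : 3 ≤ p)
    (h1 : Nat.choose (p + r - 3) (p - 2) ≤ n)
    (h2 : n < Nat.choose (p + r - 2) (p - 2))
    (h1' : Nat.choose (p + r' - 3) (p - 2) ≤ n - 1)
    (h2' : n - 1 < Nat.choose (p + r' - 2) (p - 2)) :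
    2 * (FSK (n - 1) p r' : ℤ) - FSK n p r ≥ (FSK n p r : ℤ) - 2 ^ (r + 1) :=
  FSK_two_pred_general n p r r' hp h1 h2 h1' h2'
end

section
/- For all n ≥ 1 and p ≥ 3, M(n, p) ≤ K(n, p), where M(n,p) is the minimal number of moves needed to solve the Tower of Hanoi problem with n disks and p pegs. -/
/-- A state of the (n,p) Tower of Hanoi problem: each disk (0 = smallest)
sits on one of p pegs. -/
abbrev HState (n p : ℕ) := Fin n → Fin p

/-- A legal Tower of Hanoi move: exactly one disk j changes peg, j is the
smallest disk on its source peg, and every disk already on the target peg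
is larger than j. -/
def HMove {n p : ℕ} (f g : HState n p) : Prop :=
  ∃ j : Fin n, g j ≠ f j ∧ (∀ i, i ≠ j → g i = f i) ∧
    (∀ i, i ≠ j → f i = f j → j < i) ∧ (∀ i, i ≠ j → f i = g j → j < i)

/-- The shortest-path distance between two states: the least number of legal
moves in a path from f to g. -/
noncomputable def hDist {n p : ℕ} (f g : HState n p) : ℕ :=
  sInf {k | ∃ χ : List (HState n p), χ.Chain' HMove ∧
    χ.head? = some f ∧ χ.getLast? = some g ∧ χ.length = k + 1}

/-- Disk j moves at step i of the sequence χ. -/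
def MovesAt {n p : ℕ} (j : Fin n) (χ : List (HState n p)) (i : ℕ) : Prop :=
  ∃ f g : HState n p, χ[i]? = some f ∧ χ[i+1]? = some g ∧ f j ≠ g j

/-- A demolishing sequence from the state f: a path of legal moves starting
at f, whose last move moves the largest disk `big`, and in which `big` moves
exactly once. -/
def IsDemolishing {n p : ℕ} (big : Fin n) (f : HState n p)
    (χ : List (HState n p)) : Prop :=
  χ.Chain' HMove ∧ χ.head? = some f ∧ 2 ≤ χ.length ∧
    MovesAt big χ (χ.length - 2) ∧ ∀ i, MovesAt big χ i → i = χ.length - 2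

/-- A minimal demolishing sequence from f. -/
def IsMinDemolishing {n p : ℕ} (big : Fin n) (f : HState n p)
    (χ : List (HState n p)) : Prop :=
  IsDemolishing big f χ ∧ ∀ χ', IsDemolishing big f χ' → χ.length ≤ χ'.length

/-!
Frame–Stewart strategy. Let `p = s + 3` pegs, and call `n` of level `r` when
`C(s + r, s + 1) ≤ n ≤ C(s + r + 1, s + 1)`. By Pascal's rule a number `n` of level `r + 1`
for `p` pegs splits as `n₁ + n₂` with `n₁` of level `r` for `p` pegs and `n₂` of level `r + 1`
for `p - 1` pegs. Move the `n₁` smallest disks to a spare peg `c`, the `n₂` largest ones to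
the target without touching `c`, and the `n₁` smallest back on top of them; by induction this
costs at most `2 K(n₁, p) + K(n₂, p - 1)`, which Pascal's rule identifies with `K(n, p)`.
For three pegs this is the classical solution in `2 ^ n - 1` moves.
-/

namespace HMove

variable {m l p : ℕ}

theorem append_left {t t' : HState m p} (h : HMove t t') (b : HState l p) :
    HMove (Fin.append t b) (Fin.append t' b) := by
  obtain ⟨j, hj, hfix, hsrc, htgt⟩ := h
  refine ⟨Fin.castAdd l j, by simpa using hj, ?_, ?_, ?_⟩ <;> intro i hi <;>
    induction i using Fin.addCases with
    | left i => simp_all [Fin.lt_def, -Fin.val_fin_lt]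
    | right i => simp [Fin.lt_def, -Fin.val_fin_lt] <;> omega

theorem append_right {c : Fin p} {b b' : HState l p} (h : HMove b b')
    (hb : ∀ i, b i ≠ c) (hb' : ∀ i, b' i ≠ c) :
    HMove (Fin.append (fun _ : Fin m => c) b) (Fin.append (fun _ : Fin m => c) b') := by
  obtain ⟨j, hj, hfix, hsrc, htgt⟩ := h
  refine ⟨Fin.natAdd m j, by simpa using hj, ?_, ?_, ?_⟩ <;> intro i hi <;>
    induction i using Fin.addCases with
    | left i => simp_all [eq_comm]
    | right i => simp_all

end HMove

namespace Hanoi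

variable {n m l p : ℕ}

inductive ReachIn (S : Finset (Fin p)) : HState n p → HState n p → ℕ → Prop
  | refl (f : HState n p) (hf : ∀ i, f i ∈ S) : ReachIn S f f 0
  | tail {f g h : HState n p} {k : ℕ} (hfg : ReachIn S f g k) (hgh : HMove g h)
      (hh : ∀ i, h i ∈ S) : ReachIn S f h (k + 1)

namespace ReachIn

variable {S : Finset (Fin p)}

theorem start_mem {f g : HState n p} {k : ℕ} (h : ReachIn S f g k) (i : Fin n) : f i ∈ S := by
  induction h with
  | refl hf => exact hf i
  | tail _ _ _ ih => exact ih

theorem end_mem {f g : HState n p} {k : ℕ} (h : ReachIn S f g k) (i : Fin n) : g i ∈ S := by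
  cases h with
  | refl hf => exact hf i
  | tail _ _ hh => exact hh i

theorem trans {f g h : HState n p} {k l : ℕ} (hfg : ReachIn S f g k) (hgh : ReachIn S g h l) :
    ReachIn S f h (k + l) := by
  induction hgh with
  | refl => exact hfg
  | tail _ hm hh ih => exact .tail ih hm hh

theorem exists_chain {f g : HState n p} {k : ℕ} (h : ReachIn S f g k) :
    ∃ χ : List (HState n p), χ.IsChain HMove ∧ χ.head? = some f ∧ χ.getLast? = some g ∧
      χ.length = k + 1 := by
  induction h with
  | refl => exact ⟨[f], List.isChain_singleton f, rfl, rfl, rfl⟩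
  | @tail g h k _ hgh _ ih =>
    obtain ⟨χ, hχ, hhead, hlast, hlen⟩ := ih
    have hne : χ ≠ [] := by rintro rfl; simp at hlen
    refine ⟨χ ++ [h], ?_, by rwa [List.head?_append_of_ne_nil _ hne], by simp, by simp [hlen]⟩
    refine List.isChain_append.2 ⟨hχ, List.isChain_singleton h, fun x hx y hy => ?_⟩
    simp_all

theorem hDist_le {f g : HState n p} {k : ℕ} (h : ReachIn S f g k) : hDist f g ≤ k :=
  Nat.sInf_le h.exists_chain

theorem append_left {t t' : HState m p} {k : ℕ} (h : ReachIn S t t' k) {b : HState l p}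
    (hb : ∀ i, b i ∈ S) : ReachIn S (Fin.append t b) (Fin.append t' b) k := by
  have hmem : ∀ {u : HState m p}, (∀ i, u i ∈ S) → ∀ i, Fin.append u b i ∈ S :=
    fun hu i => by induction i using Fin.addCases <;> simp [hu, hb]
  induction h with
  | refl ht => exact .refl _ (hmem ht)
  | tail _ hm hh ih => exact .tail ih (hm.append_left b) (hmem hh)

theorem append_right {c : Fin p} (hc : c ∈ S) {b b' : HState l p} {k : ℕ}
    (h : ReachIn (S.erase c) b b' k) :
    ReachIn S (Fin.append (fun _ : Fin m => c) b) (Fin.append (fun _ : Fin m => c) b') k := by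
  have hmem : ∀ {u : HState l p}, (∀ i, u i ∈ S.erase c) →
      ∀ i, Fin.append (fun _ : Fin m => c) u i ∈ S :=
    fun hu i => by induction i using Fin.addCases <;> simp [hc, Finset.mem_of_mem_erase (hu _)]
  have hne : ∀ {u : HState l p}, (∀ i, u i ∈ S.erase c) → ∀ i, u i ≠ c :=
    fun hu i => Finset.ne_of_mem_erase (hu i)
  induction h with
  | refl hb => exact .refl _ (hmem hb)
  | tail hr hm hh ih => exact .tail ih (hm.append_right (hne hr.end_mem) (hne hh)) (hmem hh)

end ReachIn

theorem reachIn_const_of_le_one {S : Finset (Fin p)} (hn : n ≤ 1) {a b : Fin p} (ha : a ∈ S)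
    (hb : b ∈ S) (hab : a ≠ b) : ReachIn (n := n) S (fun _ => a) (fun _ => b) n := by
  interval_cases n
  · rw [Subsingleton.elim (fun _ => a) (fun _ => b)]
    exact .refl _ fun i => i.elim0
  · refine .tail (.refl _ fun _ => ha) ⟨0, hab.symm, ?_, ?_, ?_⟩ (fun _ => hb) <;>
      intro i hi <;> exact absurd (Subsingleton.elim i 0) hi

theorem reachIn_const_add {S : Finset (Fin p)} {a b c : Fin p} (hc : c ∈ S) {k₁ k₂ k₃ : ℕ}
    (h₁ : ReachIn (n := m) S (fun _ => a) (fun _ => c) k₁)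
    (h₂ : ReachIn (n := l) (S.erase c) (fun _ => a) (fun _ => b) k₂)
    (h₃ : ReachIn (n := m) S (fun _ => c) (fun _ => b) k₃) :
    ReachIn (n := m + l) S (fun _ => a) (fun _ => b) (k₁ + k₂ + k₃) := by
  have hconst (x : Fin p) : Fin.append (fun _ : Fin m => x) (fun _ : Fin l => x) = fun _ => x :=
    funext fun i => by induction i using Fin.addCases <;> simp
  rw [← hconst a, ← hconst b]
  refine ((h₁.append_left fun i => ?_).trans (h₂.append_right hc)).trans
    (h₃.append_left fun i => ?_)
  · exact Finset.mem_of_mem_erase (h₂.start_mem i)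
  · exact Finset.mem_of_mem_erase (h₂.end_mem i)

theorem exists_mem_ne_ne {α : Type*} [DecidableEq α] {S : Finset α} (hS : 2 < S.card) (a b : α) :
    ∃ c ∈ S, c ≠ a ∧ c ≠ b := by
  obtain ⟨c, hc, hcb⟩ := (S.erase a).exists_mem_ne
    (by have := S.pred_card_le_card_erase (a := a); omega) b
  exact ⟨c, Finset.mem_of_mem_erase hc, Finset.ne_of_mem_erase hc, hcb⟩

theorem reachIn_const_two_pow_sub_one {S : Finset (Fin p)} (hS : 2 < S.card) (n : ℕ) {a b : Fin p}
    (ha : a ∈ S) (hb : b ∈ S) (hab : a ≠ b) :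
    ReachIn (n := n) S (fun _ => a) (fun _ => b) (2 ^ n - 1) := by
  induction n generalizing a b with
  | zero => exact reachIn_const_of_le_one zero_le_one ha hb hab
  | succ n ih =>
    obtain ⟨c, hc, hca, hcb⟩ := exists_mem_ne_ne hS a b
    have h := reachIn_const_add hc (ih ha hc hca.symm)
      (reachIn_const_of_le_one le_rfl (Finset.mem_erase.2 ⟨hca.symm, ha⟩)
        (Finset.mem_erase.2 ⟨hcb.symm, hb⟩) hab) (ih hc hb hcb)
    have hk : 2 ^ n - 1 + 1 + (2 ^ n - 1) = 2 ^ (n + 1) - 1 := by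
      have := Nat.one_le_two_pow (n := n)
      rw [pow_succ]; omega
    rwa [hk] at h

theorem exists_add_mem_Icc {a₁ a₂ b₁ b₂ n : ℕ} (ha : a₁ ≤ a₂) (hb : b₁ ≤ b₂)
    (hn : n ∈ Set.Icc (a₁ + b₁) (a₂ + b₂)) :
    ∃ n₁ ∈ Set.Icc a₁ a₂, ∃ n₂ ∈ Set.Icc b₁ b₂, n = n₁ + n₂ := by
  obtain ⟨h₁, h₂⟩ := hn
  exact ⟨n - min b₂ (n - a₁), ⟨by omega, by omega⟩, min b₂ (n - a₁), ⟨by omega, by omega⟩, by omega⟩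

def fsSum (s r : ℕ) : ℕ := ∑ t ∈ Finset.range r, 2 ^ t * Nat.choose (s + t) s

theorem FSK_add_three (n s r : ℕ) :
    FSK n (s + 3) r = fsSum s r + 2 ^ r * (n - Nat.choose (s + r) (s + 1)) := by
  have h₃ (t : ℕ) : s + 3 + t - 3 = s + t := by omega
  simp only [FSK, fsSum, h₃, Nat.add_sub_cancel, show s + 3 - 2 = s + 1 by omega]

theorem fsSum_zero (r : ℕ) : fsSum 0 r = 2 ^ r - 1 := by
  simpa [fsSum] using Nat.geomSum_eq le_rfl r

theorem fsSum_succ_succ (s r : ℕ) :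
    fsSum (s + 1) (r + 1) = 2 * fsSum (s + 1) r + fsSum s (r + 1) := by
  have hterm (k : ℕ) : 2 ^ (k + 1) * Nat.choose (s + 1 + (k + 1)) (s + 1) =
      2 * (2 ^ k * Nat.choose (s + 1 + k) (s + 1)) + 2 ^ (k + 1) * Nat.choose (s + (k + 1)) s := by
    rw [show s + 1 + (k + 1) = s + (k + 1) + 1 by ring, Nat.choose_succ_succ',
      show s + (k + 1) = s + 1 + k by ring]
    ring
  simp only [fsSum, Finset.sum_range_succ' _ r, Finset.mul_sum, hterm, Finset.sum_add_distrib, pow_zero, add_zero, Nat.choose_self, mul_one]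
  ring

theorem FSK_three_of_mem_Icc {n r : ℕ} (hn : n ∈ Set.Icc r (r + 1)) : FSK n 3 r = 2 ^ n - 1 := by
  have := FSK_add_three n 0 r
  simp only [zero_add, fsSum_zero, Nat.choose_one_right] at this
  rw [this]
  rcases (by obtain ⟨h₁, h₂⟩ := hn; omega : n = r ∨ n = r + 1) with rfl | rfl
  · simp
  · have := Nat.one_le_two_pow (n := r)
    rw [pow_succ, add_tsub_cancel_left, mul_one]
    omega

theorem choose_succ_add_succ (s r : ℕ) : Nat.choose (s + 1 + (r + 1)) (s + 2) =
    Nat.choose (s + 1 + r) (s + 2) + Nat.choose (s + (r + 1)) (s + 1) := by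
  rw [show s + 1 + (r + 1) = s + 1 + r + 1 from rfl, Nat.choose_succ_succ', add_comm,
    show s + 1 + r = s + (r + 1) by ring]

/-- Pascal's rule makes the Frame–Stewart cost additive across the split. -/
theorem FSK_split {s r n₁ n₂ : ℕ} (h₁ : Nat.choose (s + 1 + r) (s + 2) ≤ n₁)
    (h₂ : Nat.choose (s + (r + 1)) (s + 1) ≤ n₂) :
    2 * FSK n₁ (s + 1 + 3) r + FSK n₂ (s + 3) (r + 1) = FSK (n₁ + n₂) (s + 1 + 3) (r + 1) := by
  obtain ⟨x, rfl⟩ := Nat.exists_eq_add_of_le h₁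
  obtain ⟨y, rfl⟩ := Nat.exists_eq_add_of_le h₂
  rw [FSK_add_three, FSK_add_three, FSK_add_three, fsSum_succ_succ, choose_succ_add_succ,
    add_add_add_comm, Nat.add_sub_cancel_left, Nat.add_sub_cancel_left, Nat.add_sub_cancel_left]
  ring

/-- Closed level intervals are what make the split of `n` always possible. -/
theorem exists_reachIn_le_FSK (s : ℕ) {S : Finset (Fin p)} (hS : S.card = s + 3) (r n : ℕ)
    (hn : n ∈ Set.Icc (Nat.choose (s + r) (s + 1)) (Nat.choose (s + r + 1) (s + 1)))
    {a b : Fin p} (ha : a ∈ S) (hb : b ∈ S) (hab : a ≠ b) :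
    ∃ k ≤ FSK n (s + 3) r, ReachIn (n := n) S (fun _ => a) (fun _ => b) k := by
  induction s generalizing S r n a b with
  | zero =>
    simp only [zero_add, Nat.choose_one_right] at hn
    exact ⟨_, (FSK_three_of_mem_Icc hn).ge, reachIn_const_two_pow_sub_one (by omega) n ha hb hab⟩
  | succ s ihs =>
    induction r generalizing n a b with
    | zero =>
      have hn1 : n ≤ 1 := by simpa using hn.2
      refine ⟨n, ?_, reachIn_const_of_le_one hn1 ha hb hab⟩
      simp [FSK_add_three, fsSum]
    | succ r ihr =>
      obtain ⟨c, hc, hca, hcb⟩ := exists_mem_ne_ne (S := S) (by omega) a b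
      have hSc : (S.erase c).card = s + 3 := by rw [Finset.card_erase_of_mem hc, hS]; rfl
      obtain ⟨n₁, hn₁, n₂, hn₂, rfl⟩ := exists_add_mem_Icc (Nat.choose_le_choose _ (by omega))
        (Nat.choose_le_choose _ (by omega)) ⟨(choose_succ_add_succ s r).symm.trans_le hn.1,
          hn.2.trans_eq (choose_succ_add_succ s (r + 1))⟩
      obtain ⟨k₁, hk₁, h₁⟩ := ihr n₁ hn₁ ha hc hca.symm
      obtain ⟨k₂, hk₂, h₂⟩ := ihs hSc (r + 1) n₂ hn₂ (Finset.mem_erase.2 ⟨hca.symm, ha⟩)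
        (Finset.mem_erase.2 ⟨hcb.symm, hb⟩) hab
      obtain ⟨k₃, hk₃, h₃⟩ := ihr n₁ hn₁ hc hb hcb
      refine ⟨_, ?_, reachIn_const_add hc h₁ h₂ h₃⟩
      rw [← FSK_split hn₁.1 hn₂.1]
      omega

end Hanoi

theorem M_le_FSK_general (n p r : ℕ) (hp : 3 ≤ p)
    (h1 : Nat.choose (p + r - 3) (p - 2) ≤ n)
    (h2 : n < Nat.choose (p + r - 2) (p - 2)) :
    ∀ a b : Fin p, a ≠ b →
      hDist (n := n) (fun _ => a) (fun _ => b) ≤ FSK n p r := by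
  intro a b hab
  obtain ⟨s, rfl⟩ : ∃ s, p = s + 3 := ⟨p - 3, by omega⟩
  have hlevel : n ∈ Set.Icc (Nat.choose (s + r) (s + 1)) (Nat.choose (s + r + 1) (s + 1)) := by
    rw [show s + 3 + r - 3 = s + r by omega, show s + 3 - 2 = s + 1 by omega] at h1
    rw [show s + 3 + r - 2 = s + r + 1 by omega, show s + 3 - 2 = s + 1 by omega] at h2
    exact ⟨h1, h2.le⟩
  obtain ⟨k, hk, hreach⟩ := Hanoi.exists_reachIn_le_FSK s (S := Finset.univ) (by simp) r n
    hlevel (Finset.mem_univ a) (Finset.mem_univ b) hab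
  exact hreach.hDist_le.trans hk

/-- M(n,p) ≤ K(n,p): the minimal number of moves between two distinct
constant states is at most the Frame-Stewart quantity. -/
theorem M_le_FSK (n p r : ℕ) (hn : 1 ≤ n) (hp : 3 ≤ p)
    (h1 : Nat.choose (p + r - 3) (p - 2) ≤ n)
    (h2 : n < Nat.choose (p + r - 2) (p - 2)) :
    ∀ a b : Fin p, a ≠ b →
      hDist (n := n) (fun _ => a) (fun _ => b) ≤ FSK n p r :=
  M_le_FSK_general n p r hp h1 h2
end

section
/- For every n ≥ 1, p ≥ 4, K(n, p) ≤ K(n, p-1): adding available pegs never increases the Frame-Stewart bound. -/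
/-!
With `p = j + 3` pegs, `K(n, p)` is a sum over the disks: disk `i` (counting from `0`) contributes
`2 ^ t`, where its level `t` is the least one with `i < C(t + j + 1, j + 1)`. Indeed, by
Pascal's rule the disks of level `t` form a block of `C(t + j, j)` consecutive disks, which gives
the closed form. Since `C(t + j + 1, j + 1) ≤ C(t + j + 2, j + 2)`, the level of every disk can
only drop when a peg is added, and so can the sum.
-/

open Finset

lemma exists_lt_choose_add_succ (j i : ℕ) : ∃ t, i < (t + j + 1).choose (j + 1) := by
  refine ⟨i, ?_⟩
  calc i < (i + 1).choose i := by rw [Nat.choose_succ_self_right]; omega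
    _ ≤ (i + (j + 1)).choose i := Nat.choose_le_choose i (by omega)
    _ = (i + j + 1).choose (j + 1) := by rw [Nat.choose_symm_add, Nat.add_assoc]

def frameStewartLevel (j i : ℕ) : ℕ := Nat.find (exists_lt_choose_add_succ j i)

def frameStewartSum (j n : ℕ) : ℕ := ∑ i ∈ range n, 2 ^ frameStewartLevel j i

lemma frameStewartLevel_eq {j r i : ℕ} (h₁ : (r + j).choose (j + 1) ≤ i)
    (h₂ : i < (r + j + 1).choose (j + 1)) : frameStewartLevel j i = r := by
  refine (Nat.find_eq_iff _).2 ⟨h₂, fun t ht => ?_⟩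
  have : (t + j + 1).choose (j + 1) ≤ (r + j).choose (j + 1) := Nat.choose_le_choose _ (by omega)
  omega

lemma frameStewartLevel_succ_le (j i : ℕ) :
    frameStewartLevel (j + 1) i ≤ frameStewartLevel j i := by
  set t := frameStewartLevel j i
  have hi : i < (t + j + 1).choose (j + 1) := Nat.find_spec (exists_lt_choose_add_succ j i)
  have hpascal := Nat.choose_succ_succ' (t + j + 1) (j + 1)
  exact Nat.find_min' _ (by rw [← Nat.add_assoc]; omega)

lemma frameStewartSum_succ_le (j n : ℕ) : frameStewartSum (j + 1) n ≤ frameStewartSum j n :=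
  sum_le_sum fun i _ => Nat.pow_le_pow_right two_pos (frameStewartLevel_succ_le j i)

lemma frameStewartSum_eq_add {j r n : ℕ} (h₁ : (r + j).choose (j + 1) ≤ n)
    (h₂ : n ≤ (r + j + 1).choose (j + 1)) :
    frameStewartSum j n =
      frameStewartSum j ((r + j).choose (j + 1)) + 2 ^ r * (n - (r + j).choose (j + 1)) := by
  rw [frameStewartSum, frameStewartSum, ← sum_range_add_sum_Ico _ h₁, mul_comm, ← smul_eq_mul,
    ← Nat.card_Ico, ← sum_const]
  refine congrArg _ (sum_congr rfl fun i hi => ?_)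
  rw [mem_Ico] at hi
  rw [frameStewartLevel_eq hi.1 (hi.2.trans_le h₂)]

lemma frameStewartSum_choose (j r : ℕ) :
    frameStewartSum j ((r + j).choose (j + 1)) = ∑ t ∈ range r, 2 ^ t * (t + j).choose j := by
  induction r with
  | zero => simp [frameStewartSum]
  | succ r ih =>
    have hpascal := Nat.choose_succ_succ' (r + j) j
    rw [sum_range_succ, ← ih, Nat.add_right_comm,
      frameStewartSum_eq_add (Nat.choose_le_choose _ (Nat.le_add_right _ 1)) le_rfl]
    congr 2
    omega

lemma FSK_eq_frameStewartSum {n p r : ℕ} (hp : 3 ≤ p) (h₁ : (p + r - 3).choose (p - 2) ≤ n)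
    (h₂ : n < (p + r - 2).choose (p - 2)) : FSK n p r = frameStewartSum (p - 3) n := by
  obtain ⟨j, rfl⟩ : ∃ j, p = j + 3 := ⟨p - 3, by omega⟩
  have hsum : ∀ t, j + 3 + t - 3 = t + j := fun t => by omega
  simp only [FSK, hsum, Nat.add_sub_cancel, show j + 3 - 2 = j + 1 by omega,
    show j + 3 + r - 2 = r + j + 1 by omega] at h₁ h₂ ⊢
  rw [frameStewartSum_eq_add h₁ h₂.le, frameStewartSum_choose]

theorem FSK_antitone_pegs_general (n p r r' : ℕ) (hp : 4 ≤ p)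
    (h1 : Nat.choose (p + r - 3) (p - 2) ≤ n)
    (h2 : n < Nat.choose (p + r - 2) (p - 2))
    (h1' : Nat.choose ((p - 1) + r' - 3) ((p - 1) - 2) ≤ n)
    (h2' : n < Nat.choose ((p - 1) + r' - 2) ((p - 1) - 2)) :
    FSK n p r ≤ FSK n (p - 1) r' := by
  rw [FSK_eq_frameStewartSum (by omega) h1 h2, FSK_eq_frameStewartSum (by omega) h1' h2',
    show p - 3 = p - 1 - 3 + 1 by omega]
  exact frameStewartSum_succ_le _ _

/-- Adding pegs never increases the Frame-Stewart bound: K(n,p) <= K(n,p-1) for p >= 4. -/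
theorem FSK_antitone_pegs (n p r r' : ℕ) (hn : 1 ≤ n) (hp : 4 ≤ p)
    (h1 : Nat.choose (p + r - 3) (p - 2) ≤ n)
    (h2 : n < Nat.choose (p + r - 2) (p - 2))
    (h1' : Nat.choose ((p - 1) + r' - 3) ((p - 1) - 2) ≤ n)
    (h2' : n < Nat.choose ((p - 1) + r' - 2) ((p - 1) - 2)) :
    FSK n p r ≤ FSK n (p - 1) r' :=
  FSK_antitone_pegs_general n p r r' hp h1 h2 h1' h2'
end
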